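/- Under the old placement with distinct demands, if t := K·M/N satisfies 1 ≤ t ≤ K, then the expected rate satisfies E[R] ≥ K·(1 − M/N) − F·K·t·exp(−2t·(1 − t/K)·(1 − 1/K)). -/

import Mathlib

open MeasureTheory ProbabilityTheory Finset
open scoped ENNReal

/-!
Write `V_k` for the number of packets of file `d k` stored in exactly the caches of `S ∖ {k}`.
For naturals, `∑ V_k ≤ max V_k + ∑_{k ≠ k'} V_k V_k'`, hence
`E[max V_k] ≥ ∑ E[V_k] - ∑_{k ≠ k'} E[V_k V_k']`. A packet lies in a given cache with probability
`q = a/F = M/N`, independently over caches, so `E[V_k] = F q^(|S|-1) (1-q)^(K-|S|+1)`; and since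
distinct users request distinct files, `V_k` and `V_k'` are independent. Summing over `S` with the
binomial theorem gives `E[R] ≥ K(1-q) - F K(K-1) q²(1-q)² (q² + (1-q)²)^(K-2)`, and
`q² + (1-q)² = 1 - 2q(1-q) ≤ exp(-2q(1-q))` turns the error term into the stated exponential.
-/

theorem sum_le_sup_add_sum_sum_erase_mul {ι : Type*} [DecidableEq ι] (s : Finset ι) (v : ι → ℕ) :
    ∑ i ∈ s, v i ≤ s.sup v + ∑ i ∈ s, ∑ j ∈ s.erase i, v i * v j := by
  rcases s.eq_empty_or_nonempty with rfl | hs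
  · simp
  obtain ⟨i₀, hi₀, hsup⟩ := s.exists_mem_eq_sup hs v
  have hle : ∀ i ∈ s.erase i₀, v i ≤ ∑ j ∈ s.erase i, v i * v j := fun i hi => by
    have hi₀i : i₀ ∈ s.erase i := mem_erase.2 ⟨(ne_of_mem_erase hi).symm, hi₀⟩
    have hvi : v i ≤ v i₀ := hsup ▸ le_sup (mem_of_mem_erase hi)
    calc v i ≤ v i * v i₀ := by
          rcases Nat.eq_zero_or_pos (v i₀) with h | h
          · rw [h] at hvi ⊢; simpa using hvi
          · exact Nat.le_mul_of_pos_right _ h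
      _ ≤ ∑ j ∈ s.erase i, v i * v j :=
          single_le_sum (f := fun j => v i * v j) (fun _ _ => Nat.zero_le _) hi₀i
  calc ∑ i ∈ s, v i = v i₀ + ∑ i ∈ s.erase i₀, v i := (add_sum_erase s v hi₀).symm
    _ ≤ s.sup v + ∑ i ∈ s.erase i₀, ∑ j ∈ s.erase i, v i * v j := by
        rw [hsup]; gcongr with i hi; exact hle i hi
    _ ≤ s.sup v + ∑ i ∈ s, ∑ j ∈ s.erase i, v i * v j := by
        gcongr; exact erase_subset _ _

section BinomialSums

variable {α R : Type*} [Fintype α] [DecidableEq α] [CommRing R]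

theorem sum_filter_superset_eq_sum_powerset_compl {M : Type*} [AddCommMonoid M]
    (B : Finset α) (g : Finset α → M) :
    ∑ S : Finset α with B ⊆ S, g S = ∑ T ∈ Bᶜ.powerset, g (B ∪ T) := by
  refine sum_nbij' (· \ B) (B ∪ ·) ?_ ?_ ?_ ?_ ?_
  · intro S _
    simp [sdiff_eq_inter_compl]
  · intro T _
    simp
  · intro S hS
    exact union_sdiff_of_subset (mem_filter.1 hS).2
  · intro T hT
    exact union_sdiff_cancel_left
      (disjoint_of_subset_right (mem_powerset.1 hT) disjoint_compl_right)
  · intro S hS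
    rw [union_sdiff_of_subset (mem_filter.1 hS).2]

theorem sum_filter_mem_pow_mul_pow (q : R) (k : α) :
    ∑ S : Finset α with k ∈ S, q ^ #(S.erase k) * (1 - q) ^ (Fintype.card α - #(S.erase k))
      = 1 - q := by
  simp_rw [← singleton_subset_iff]
  rw [sum_filter_superset_eq_sum_powerset_compl]
  have hcard : #({k}ᶜ : Finset α) + 1 = Fintype.card α := by
    rw [card_compl, card_singleton]; have := Fintype.card_pos_iff.2 ⟨k⟩; omega
  calc ∑ T ∈ ({k}ᶜ : Finset α).powerset,
        q ^ #(({k} ∪ T).erase k) * (1 - q) ^ (Fintype.card α - #(({k} ∪ T).erase k))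
      = ∑ T ∈ ({k}ᶜ : Finset α).powerset,
          (1 - q) * (q ^ #T * (1 - q) ^ (#({k}ᶜ : Finset α) - #T)) := by
        refine sum_congr rfl fun T hT => ?_
        have hkT : k ∉ T := fun h => by simpa using mem_powerset.1 hT h
        have hT : #T ≤ #({k}ᶜ : Finset α) := card_le_card (mem_powerset.1 hT)
        rw [← insert_eq, erase_insert hkT, ← hcard, Nat.sub_add_comm hT, pow_succ]
        ring
    _ = 1 - q := by rw [← mul_sum, sum_pow_mul_eq_add_pow]; simp

theorem sum_filter_pair_mem_pow_mul_pow (q : R) {k k' : α} (hk : k ≠ k') :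
    ∑ S : Finset α with k ∈ S ∧ k' ∈ S,
        (q ^ #(S.erase k) * (1 - q) ^ (Fintype.card α - #(S.erase k))) *
          (q ^ #(S.erase k') * (1 - q) ^ (Fintype.card α - #(S.erase k')))
      = q ^ 2 * (1 - q) ^ 2 * (q ^ 2 + (1 - q) ^ 2) ^ (Fintype.card α - 2) := by
  have hB : ∀ S : Finset α, k ∈ S ∧ k' ∈ S ↔ {k, k'} ⊆ S := fun S => by
    simp [insert_subset_iff]
  simp_rw [hB]
  rw [sum_filter_superset_eq_sum_powerset_compl]
  have hcard : #({k, k'}ᶜ : Finset α) + 2 = Fintype.card α := by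
    have := card_le_univ ({k, k'} : Finset α)
    rw [card_compl, card_pair hk] at *; omega
  calc ∑ T ∈ ({k, k'}ᶜ : Finset α).powerset,
        (q ^ #(({k, k'} ∪ T).erase k) * (1 - q) ^ (Fintype.card α - #(({k, k'} ∪ T).erase k))) *
          (q ^ #(({k, k'} ∪ T).erase k') *
            (1 - q) ^ (Fintype.card α - #(({k, k'} ∪ T).erase k')))
      = ∑ T ∈ ({k, k'}ᶜ : Finset α).powerset, q ^ 2 * (1 - q) ^ 2 *
          ((q ^ 2) ^ #T * ((1 - q) ^ 2) ^ (#({k, k'}ᶜ : Finset α) - #T)) := by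
        refine sum_congr rfl fun T hT => ?_
        have hdisj : Disjoint {k, k'} T :=
          disjoint_of_subset_right (mem_powerset.1 hT) disjoint_compl_right
        have hT : #T ≤ #({k, k'}ᶜ : Finset α) := card_le_card (mem_powerset.1 hT)
        have herase : ∀ i ∈ ({k, k'} : Finset α), #(({k, k'} ∪ T).erase i) = #T + 1 := by
          intro i hi
          rw [card_erase_of_mem (mem_union_left _ hi), card_union_of_disjoint hdisj, card_pair hk]
          omega
        rw [herase k (by simp), herase k' (by simp), ← hcard,
          show #({k, k'}ᶜ : Finset α) + 2 - (#T + 1) = #({k, k'}ᶜ : Finset α) - #T + 1 by omega]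
        simp only [← pow_mul]
        ring
    _ = q ^ 2 * (1 - q) ^ 2 * (q ^ 2 + (1 - q) ^ 2) ^ (Fintype.card α - 2) := by
        rw [← mul_sum, sum_pow_mul_eq_add_pow, ← hcard, Nat.add_sub_cancel]

theorem sum_nonempty_sum_mem_pow_mul_pow (q : R) :
    ∑ S : Finset α with S.Nonempty, ∑ k ∈ S,
        q ^ #(S.erase k) * (1 - q) ^ (Fintype.card α - #(S.erase k))
      = Fintype.card α * (1 - q) := by
  rw [sum_comm' (t' := univ) (s' := fun k => {S | k ∈ S}) (fun S k => by
    simpa using fun h => ⟨k, h⟩)]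
  simp [sum_filter_mem_pow_mul_pow, mul_sub]

theorem sum_nonempty_sum_mem_sum_erase_pow_mul_pow (q : R) :
    ∑ S : Finset α with S.Nonempty, ∑ k ∈ S, ∑ k' ∈ S.erase k,
        (q ^ #(S.erase k) * (1 - q) ^ (Fintype.card α - #(S.erase k))) *
          (q ^ #(S.erase k') * (1 - q) ^ (Fintype.card α - #(S.erase k')))
      = (Fintype.card α * (Fintype.card α - 1) : ℕ) *
          (q ^ 2 * (1 - q) ^ 2 * (q ^ 2 + (1 - q) ^ 2) ^ (Fintype.card α - 2)) := by
  rw [sum_comm' (t' := univ) (s' := fun k => {S | k ∈ S}) (fun S k => by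
    simpa using fun h => ⟨k, h⟩)]
  have hpairs : ∀ k : α, ∑ S : Finset α with k ∈ S, ∑ k' ∈ S.erase k,
        (q ^ #(S.erase k) * (1 - q) ^ (Fintype.card α - #(S.erase k))) *
          (q ^ #(S.erase k') * (1 - q) ^ (Fintype.card α - #(S.erase k')))
      = (Fintype.card α - 1) •
          (q ^ 2 * (1 - q) ^ 2 * (q ^ 2 + (1 - q) ^ 2) ^ (Fintype.card α - 2)) := fun k => by
    rw [sum_comm' (t' := univ.erase k) (s' := fun k' => {S | k ∈ S ∧ k' ∈ S}) (fun S k' => by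
      simp only [mem_filter, mem_univ, true_and, mem_erase]; tauto)]
    rw [sum_congr rfl fun k' hk' => sum_filter_pair_mem_pow_mul_pow q (ne_of_mem_erase hk').symm,
      sum_const, card_erase_of_mem (mem_univ k), card_univ]
  rw [sum_congr rfl fun k _ => hpairs k, sum_const, card_univ, smul_smul, nsmul_eq_mul]

end BinomialSums

theorem card_filter_mem_and_card_eq {α : Type*} [Fintype α] [DecidableEq α] {a : ℕ} (ha : 0 < a)
    (x : α) : #{A : Finset α | x ∈ A ∧ #A = a} = (Fintype.card α - 1).choose (a - 1) := by
  rw [← card_univ, ← card_erase_of_mem (mem_univ x), ← card_powersetCard]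
  refine card_nbij' (·.erase x) (insert x) (fun A hA => ?_) (fun B hB => ?_)
    (fun A hA => insert_erase (mem_filter.1 hA).2.1)
    (fun B hB => erase_insert fun h => by simpa using (mem_powersetCard.1 hB).1 h)
  · obtain ⟨hxA, hA⟩ : x ∈ A ∧ #A = a := by simpa using hA
    simp [mem_powersetCard, card_erase_of_mem hxA, hA, erase_subset_erase]
  · rw [mem_coe, mem_powersetCard] at hB
    have hxB : x ∉ B := fun h => by simpa using hB.1 h
    simp [card_insert_of_notMem hxB, hB.2]
    omega

section Probability

variable {Ω : Type*} [MeasurableSpace Ω] {μ : Measure Ω}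

theorem measureReal_mem_of_uniform_powersetCard {α : Type*} [Fintype α] [DecidableEq α] {a : ℕ}
    {X : Ω → Finset α} (hX : @Measurable _ _ _ ⊤ X)
    (hunif : ∀ A, μ {ω | X ω = A} =
      if #A = a then (((Fintype.card α).choose a : ℝ≥0∞))⁻¹ else 0)
    (ha : 0 < a) (haα : a ≤ Fintype.card α) (x : α) :
    μ.real {ω | x ∈ X ω} = a / Fintype.card α := by
  have hunion : {ω | x ∈ X ω} = ⋃ A ∈ ({A | x ∈ A} : Finset (Finset α)), {ω | X ω = A} := by
    ext ω; simp
  rw [hunion, measureReal_biUnion_finset (f := fun A => {ω | X ω = A})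
      (fun A _ B _ hAB => Set.disjoint_left.2 fun ω h h' => hAB (h.symm.trans h'))
      (fun A _ => by exact hX (MeasurableSpace.measurableSet_top (s := {A})))
      (fun A _ => by rw [hunif]; split_ifs <;> simp [(Nat.choose_pos haα).ne'])]
  simp only [measureReal_def, hunif, apply_ite ENNReal.toReal, ENNReal.toReal_inv,
    ENNReal.toReal_natCast, ENNReal.toReal_zero]
  rw [sum_ite, sum_const_zero, add_zero, sum_const, filter_filter, card_filter_mem_and_card_eq ha,
    nsmul_eq_mul]
  have hα : 0 < Fintype.card α := ha.trans_le haα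
  have hchoose := Nat.add_one_mul_choose_eq (Fintype.card α - 1) (a - 1)
  rw [Nat.sub_add_cancel hα, Nat.sub_add_cancel ha] at hchoose
  have hpos : (0 : ℝ) < (Fintype.card α).choose a := by exact_mod_cast Nat.choose_pos haα
  field_simp
  exact_mod_cast (mul_comm _ _).trans hchoose

theorem ProbabilityTheory.iIndepFun.measureReal_iInter_preimage {ι : Type*} [Fintype ι]
    {β : ι → Type*} {m : ∀ i, MeasurableSpace (β i)} {X : ∀ i, Ω → β i} (h : iIndepFun X μ)
    {A : ∀ i, Set (β i)} (hA : ∀ i, MeasurableSet (A i)) :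
    μ.real (⋂ i, X i ⁻¹' A i) = ∏ i, μ.real (X i ⁻¹' A i) := by
  simpa [measureReal_def, ENNReal.toReal_prod] using
    congrArg ENNReal.toReal (h.measure_inter_preimage_eq_mul univ fun i _ => hA i)

theorem ProbabilityTheory.iIndepFun.measureReal_iInter_inl_inter_iInter_inr {ι ι' β : Type*}
    [Fintype ι] [Fintype ι'] {m : ι ⊕ ι' → MeasurableSpace β} {Z : ι ⊕ ι' → Ω → β}
    (h : iIndepFun (m := m) Z μ)
    {A : ι → Set β} {B : ι' → Set β} (hA : ∀ i, MeasurableSet[m (.inl i)] (A i))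
    (hB : ∀ j, MeasurableSet[m (.inr j)] (B j)) :
    μ.real ((⋂ i, Z (.inl i) ⁻¹' A i) ∩ ⋂ j, Z (.inr j) ⁻¹' B j)
      = μ.real (⋂ i, Z (.inl i) ⁻¹' A i) * μ.real (⋂ j, Z (.inr j) ⁻¹' B j) := by
  have := h.measureReal_iInter_preimage (A := Sum.elim A B) (Sum.rec hA hB)
  simp only [Set.iInter_sum, Fintype.prod_sum_type, Sum.elim_inl, Sum.elim_inr] at this
  rw [this, (h.precomp Sum.inl_injective).measureReal_iInter_preimage hA,
    (h.precomp Sum.inr_injective).measureReal_iInter_preimage hB]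

def storedExactlyBy {ι α : Type*} (X : ι → Ω → Finset α) (x : α) (T : Finset ι) : Set Ω :=
  ⋂ i, X i ⁻¹' {A | x ∈ A ↔ i ∈ T}

theorem measurableSet_storedExactlyBy {ι α : Type*} [Countable ι] {X : ι → Ω → Finset α}
    (hX : ∀ i, @Measurable _ _ _ ⊤ (X i)) (x : α) (T : Finset ι) :
    MeasurableSet (storedExactlyBy X x T) :=
  .iInter fun i => hX i MeasurableSpace.measurableSet_top

theorem measureReal_storedExactlyBy [IsProbabilityMeasure μ] {ι α : Type*} [Fintype ι]
    [DecidableEq ι] {X : ι → Ω → Finset α} (hX : ∀ i, @Measurable _ _ _ ⊤ (X i))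
    (hind : iIndepFun (m := fun _ => ⊤) X μ) {x : α} {p : ℝ}
    (hp : ∀ i, μ.real {ω | x ∈ X i ω} = p) (T : Finset ι) :
    μ.real (storedExactlyBy X x T) = p ^ #T * (1 - p) ^ (Fintype.card ι - #T) := by
  have hfactor : ∀ i, μ.real (X i ⁻¹' {A | x ∈ A ↔ i ∈ T}) = if i ∈ T then p else 1 - p := by
    intro i
    split_ifs with hi
    · simpa [hi] using hp i
    · have hmeas : MeasurableSet {ω | x ∈ X i ω} :=
        hX i (MeasurableSpace.measurableSet_top (s := {A | x ∈ A}))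
      rw [← hp i, ← probReal_compl_eq_one_sub hmeas]
      congr 1
      ext ω
      simp [hi]
  rw [storedExactlyBy, hind.measureReal_iInter_preimage fun _ => MeasurableSpace.measurableSet_top]
  have hTc : ({i | i ∉ T} : Finset ι) = Tᶜ := by ext; simp
  rw [prod_congr rfl fun i _ => hfactor i, prod_ite, prod_const, prod_const, filter_mem_eq_inter,
    univ_inter, hTc, card_compl]

end Probability

section Counting

open Classical

variable {Ω α β : Type*} [Fintype α] [Fintype β]

theorem natCast_card_filter_mem_eq_sum_indicator (E : α → Set Ω) (ω : Ω) :
    (#{x | ω ∈ E x} : ℝ) = ∑ x, (E x).indicator 1 ω := by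
  rw [natCast_card_filter]
  simp only [Set.indicator_apply, Pi.one_apply]

theorem natCast_card_filter_mem_mul_eq_sum_sum_indicator (E : α → Set Ω) (E' : β → Set Ω)
    (ω : Ω) :
    (#{x | ω ∈ E x} : ℝ) * #{y | ω ∈ E' y} = ∑ x, ∑ y, (E x ∩ E' y).indicator 1 ω := by
  simp only [natCast_card_filter_mem_eq_sum_indicator, sum_mul_sum, Set.inter_indicator_one,
    Pi.mul_apply]

variable [MeasurableSpace Ω] {μ : Measure Ω}

theorem integrable_indicator_one [IsFiniteMeasure μ] {s : Set Ω} (hs : MeasurableSet s) :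
    Integrable (s.indicator (1 : Ω → ℝ)) μ :=
  (integrable_const 1).indicator hs

theorem measurable_card_filter_mem {E : α → Set Ω} (hE : ∀ x, MeasurableSet (E x)) :
    Measurable fun ω => #{x | ω ∈ E x} := by
  simp_rw [card_filter]
  exact measurable_sum _ fun x _ => measurable_const.ite (hE x) measurable_const

theorem integrable_card_filter_mem [IsFiniteMeasure μ] {E : α → Set Ω}
    (hE : ∀ x, MeasurableSet (E x)) : Integrable (fun ω => (#{x | ω ∈ E x} : ℝ)) μ := by
  simp_rw [natCast_card_filter_mem_eq_sum_indicator]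
  exact integrable_finsetSum _ fun x _ => integrable_indicator_one (hE x)

theorem integral_card_filter_mem [IsFiniteMeasure μ] {E : α → Set Ω}
    (hE : ∀ x, MeasurableSet (E x)) : ∫ ω, (#{x | ω ∈ E x} : ℝ) ∂μ = ∑ x, μ.real (E x) := by
  simp_rw [natCast_card_filter_mem_eq_sum_indicator]
  rw [integral_finsetSum _ fun x _ => integrable_indicator_one (hE x)]
  simp_rw [integral_indicator_one (hE _)]

theorem integrable_card_filter_mem_mul [IsFiniteMeasure μ] {E : α → Set Ω} {E' : β → Set Ω}
    (hE : ∀ x, MeasurableSet (E x)) (hE' : ∀ y, MeasurableSet (E' y)) :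
    Integrable (fun ω => (#{x | ω ∈ E x} : ℝ) * #{y | ω ∈ E' y}) μ := by
  simp_rw [natCast_card_filter_mem_mul_eq_sum_sum_indicator]
  exact integrable_finsetSum _ fun x _ => integrable_finsetSum _ fun y _ =>
    integrable_indicator_one ((hE x).inter (hE' y))

theorem integral_card_filter_mem_mul [IsFiniteMeasure μ] {E : α → Set Ω} {E' : β → Set Ω}
    (hE : ∀ x, MeasurableSet (E x)) (hE' : ∀ y, MeasurableSet (E' y)) :
    ∫ ω, (#{x | ω ∈ E x} : ℝ) * #{y | ω ∈ E' y} ∂μ = ∑ x, ∑ y, μ.real (E x ∩ E' y) := by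
  simp_rw [natCast_card_filter_mem_mul_eq_sum_sum_indicator]
  rw [integral_finsetSum _ fun x _ => integrable_finsetSum _ fun y _ =>
    integrable_indicator_one ((hE x).inter (hE' y))]
  simp_rw [integral_finsetSum _ fun y _ => integrable_indicator_one (((hE _).inter (hE' y))),
    integral_indicator_one ((hE _).inter (hE' _))]

end Counting

section Expectation

variable {Ω : Type*} [MeasurableSpace Ω] {μ : Measure Ω}

theorem integrable_natCast_sup [IsFiniteMeasure μ] {ι : Type*} (s : Finset ι) {V : ι → Ω → ℕ}
    (hV : ∀ k, Measurable (V k)) {n : ℕ} (hle : ∀ k ω, V k ω ≤ n) :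
    Integrable (fun ω => ((s.sup fun k => V k ω : ℕ) : ℝ)) μ := by
  have hmeas : Measurable fun ω => s.sup fun k => V k ω := by
    induction s using Finset.cons_induction with
    | empty => exact measurable_const
    | cons k s _ ih => simp only [sup_cons]; exact (hV k).sup ih
  refine .of_bound ((measurable_of_countable _).comp hmeas).aestronglyMeasurable n
    (.of_forall fun ω => ?_)
  simpa using Finset.sup_le fun k _ => hle k ω

theorem sum_integral_sub_sum_integral_mul_le_integral_sup {ι : Type*} [DecidableEq ι]
    (s : Finset ι) {V : ι → Ω → ℕ} (hV : ∀ k, Integrable (fun ω => (V k ω : ℝ)) μ)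
    (hVV : ∀ k k', Integrable (fun ω => (V k ω : ℝ) * V k' ω) μ)
    (hsup : Integrable (fun ω => ((s.sup fun k => V k ω : ℕ) : ℝ)) μ) :
    ∑ k ∈ s, ∫ ω, (V k ω : ℝ) ∂μ - ∑ k ∈ s, ∑ k' ∈ s.erase k, ∫ ω, (V k ω : ℝ) * V k' ω ∂μ
      ≤ ∫ ω, ((s.sup fun k => V k ω : ℕ) : ℝ) ∂μ := by
  have hsum := integrable_finsetSum s fun k _ => hV k
  have hsum2 :=
    integrable_finsetSum s fun k _ => integrable_finsetSum (s.erase k) fun k' _ => hVV k k'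
  simp_rw [← integral_finsetSum _ fun k' _ => hVV _ k']
  rw [← integral_finsetSum _ fun k _ => hV k, ← integral_finsetSum _ fun k _ => ?_,
    ← integral_sub hsum hsum2]
  · refine integral_mono (hsum.sub hsum2) hsup fun ω => ?_
    have := Nat.cast_le (α := ℝ).2 (sum_le_sup_add_sum_sum_erase_mul s fun k => V k ω)
    push_cast at this
    linarith
  · exact integrable_finsetSum _ fun k' _ => hVV k k'

end Expectation

section CachePlacement

open Classical

variable {Ω ι ν α : Type*} [MeasurableSpace Ω] {μ : Measure Ω} [IsProbabilityMeasure μ]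
  [Fintype ι] [Fintype α] {C : ι × ν → Ω → Finset α}

theorem integral_card_storedExactlyBy (hC_meas : ∀ i, @Measurable _ _ _ ⊤ (C i))
    (hC_indep : iIndepFun (m := fun _ => ⊤) C μ) {q : ℝ}
    (hq : ∀ i x, μ.real {ω | x ∈ C i ω} = q) (n : ν) (T : Finset ι) :
    ∫ ω, (#{x | ω ∈ storedExactlyBy (fun j => C (j, n)) x T} : ℝ) ∂μ
      = Fintype.card α * (q ^ #T * (1 - q) ^ (Fintype.card ι - #T)) := by
  rw [integral_card_filter_mem fun x => measurableSet_storedExactlyBy (fun j => hC_meas _) x T]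
  simp [measureReal_storedExactlyBy (fun j => hC_meas _)
    (hC_indep.precomp (Prod.mk_left_injective n)) (fun j => hq _ _)]

theorem integral_card_storedExactlyBy_mul (hC_meas : ∀ i, @Measurable _ _ _ ⊤ (C i))
    (hC_indep : iIndepFun (m := fun _ => ⊤) C μ) {q : ℝ}
    (hq : ∀ i x, μ.real {ω | x ∈ C i ω} = q) {n n' : ν} (hn : n ≠ n') (T T' : Finset ι) :
    ∫ ω, (#{x | ω ∈ storedExactlyBy (fun j => C (j, n)) x T} : ℝ) *
        #{x | ω ∈ storedExactlyBy (fun j => C (j, n')) x T'} ∂μ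
      = (Fintype.card α * (q ^ #T * (1 - q) ^ (Fintype.card ι - #T))) *
          (Fintype.card α * (q ^ #T' * (1 - q) ^ (Fintype.card ι - #T'))) := by
  have hinj : Function.Injective (Sum.elim (fun j : ι => (j, n)) (fun j => (j, n'))) :=
    (Prod.mk_left_injective n).sumElim (Prod.mk_left_injective n')
      fun j j' h => hn (Prod.mk.inj h).2
  have hind := hC_indep.precomp hinj
  have hmeas := fun (n : ν) (T : Finset ι) x =>
    measurableSet_storedExactlyBy (fun j => hC_meas (j, n)) x T
  have hpair : ∀ x y, μ.real (storedExactlyBy (fun j => C (j, n)) x T ∩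
      storedExactlyBy (fun j => C (j, n')) y T') =
        μ.real (storedExactlyBy (fun j => C (j, n)) x T) *
          μ.real (storedExactlyBy (fun j => C (j, n')) y T') := fun x y =>
    hind.measureReal_iInter_inl_inter_iInter_inr (fun _ => MeasurableSpace.measurableSet_top)
      (fun _ => MeasurableSpace.measurableSet_top)
  rw [integral_card_filter_mem_mul (hmeas n T) (hmeas n' T')]
  simp only [hpair, measureReal_storedExactlyBy (fun j => hC_meas _)
    (hC_indep.precomp (Prod.mk_left_injective _)) (fun j => hq _ _), sum_const, card_univ,
    nsmul_eq_mul]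
  ring

theorem le_integral_sum_sup_card_storedExactlyBy [DecidableEq ι]
    (hC_meas : ∀ i, @Measurable _ _ _ ⊤ (C i)) (hC_indep : iIndepFun (m := fun _ => ⊤) C μ)
    {q : ℝ} (hq : ∀ i x, μ.real {ω | x ∈ C i ω} = q) {d : ι → ν} (hd : Function.Injective d) :
    Fintype.card α * (Fintype.card ι * (1 - q)) - Fintype.card α ^ 2 *
        ((Fintype.card ι * (Fintype.card ι - 1) : ℕ) *
          (q ^ 2 * (1 - q) ^ 2 * (q ^ 2 + (1 - q) ^ 2) ^ (Fintype.card ι - 2)))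
      ≤ ∫ ω, ∑ S : Finset ι with S.Nonempty, ((S.sup fun k =>
          #{x | ω ∈ storedExactlyBy (fun j => C (j, d k)) x (S.erase k)} : ℕ) : ℝ) ∂μ := by
  have hmeas := fun k x T => measurableSet_storedExactlyBy (fun j => hC_meas (j, d k)) x T
  have hsup : ∀ S : Finset ι, Integrable (fun ω => ((S.sup fun k =>
      #{x | ω ∈ storedExactlyBy (fun j => C (j, d k)) x (S.erase k)} : ℕ) : ℝ)) μ := fun S =>
    integrable_natCast_sup S (fun k => measurable_card_filter_mem (hmeas k · _))
      (fun k ω => card_le_univ _)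
  rw [integral_finsetSum _ fun S _ => hsup S, ← sum_nonempty_sum_mem_pow_mul_pow,
    ← sum_nonempty_sum_mem_sum_erase_pow_mul_pow, mul_sum, mul_sum, ← sum_sub_distrib]
  refine sum_le_sum fun S _ => Eq.trans_le ?_ (sum_integral_sub_sum_integral_mul_le_integral_sup S
    (fun k => integrable_card_filter_mem (hmeas k · _))
    (fun k k' => integrable_card_filter_mem_mul (hmeas k · _) (hmeas k' · _)) (hsup S))
  rw [mul_sum, mul_sum]
  congr 1
  · exact sum_congr rfl fun k _ => (integral_card_storedExactlyBy hC_meas hC_indep hq _ _).symm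
  · refine sum_congr rfl fun k _ => ?_
    rw [mul_sum]
    refine sum_congr rfl fun k' hk' => ?_
    rw [integral_card_storedExactlyBy_mul hC_meas hC_indep hq
      (hd.ne (ne_of_mem_erase hk').symm)]
    ring

end CachePlacement

theorem natCast_mul_pred_mul_pow_le_exp {K : ℕ} (hK : 1 ≤ K) {q : ℝ} (hq0 : 0 ≤ q) (hq1 : q ≤ 1) :
    ((K * (K - 1) : ℕ) : ℝ) * (q ^ 2 * (1 - q) ^ 2 * (q ^ 2 + (1 - q) ^ 2) ^ (K - 2))
      ≤ K * (K * q) * Real.exp (-2 * (K * q) * (1 - K * q / K) * (1 - 1 / K)) := by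
  obtain rfl | ⟨n, rfl⟩ : K = 1 ∨ ∃ n, K = n + 2 := by
    rcases K with _ | _ | n
    · omega
    · exact .inl rfl
    · exact .inr ⟨n, rfl⟩
  · simp only [Nat.sub_self, mul_zero, Nat.cast_zero, zero_mul]
    positivity
  set c := q * (1 - q) with hc
  have hc0 : 0 ≤ c := mul_nonneg hq0 (by linarith)
  have hc4 : c ≤ 1 / 4 := by nlinarith [sq_nonneg (2 * q - 1)]
  have hexp : -2 * ((n + 2 : ℕ) * q) * (1 - (n + 2 : ℕ) * q / (n + 2 : ℕ)) * (1 - 1 / (n + 2 : ℕ))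
      = (n + 1 : ℕ) * (-2 * c) := by
    push_cast; field_simp; ring
  have hsq : q ^ 2 + (1 - q) ^ 2 = 1 - 2 * c := by ring
  have hpow : (1 - 2 * c) ^ (n + 1) ≤ Real.exp ((n + 1 : ℕ) * (-2 * c)) := by
    rw [Real.exp_nat_mul]
    exact pow_le_pow_left₀ (by linarith) (by linarith [Real.add_one_le_exp (-2 * c)]) _
  have hhalf : (1 - 2 * c) ^ n ≤ 2 * (1 - 2 * c) ^ (n + 1) := by
    rw [pow_succ]
    nlinarith [pow_nonneg (by linarith : (0 : ℝ) ≤ 1 - 2 * c) n]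
  have hlinear : 2 * ((n + 1 : ℕ) : ℝ) * (q * (1 - q) ^ 2) ≤ (n + 2 : ℕ) := by
    have : q * (1 - q) ^ 2 ≤ c := by rw [hc]; nlinarith [mul_nonneg hq0 (by linarith : 0 ≤ 1 - q)]
    push_cast; nlinarith
  rw [hexp, hsq, Nat.add_sub_cancel, show n + 2 - 1 = n + 1 by omega]
  set E := Real.exp ((n + 1 : ℕ) * (-2 * c))
  calc (((n + 2) * (n + 1) : ℕ) : ℝ) * (q ^ 2 * (1 - q) ^ 2 * (1 - 2 * c) ^ n)
      ≤ (((n + 2) * (n + 1) : ℕ) : ℝ) * (q ^ 2 * (1 - q) ^ 2 * (2 * E)) := by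
        gcongr; exact hhalf.trans (by linarith)
    _ = (n + 2 : ℕ) * q * E * (2 * ((n + 1 : ℕ) : ℝ) * (q * (1 - q) ^ 2)) := by push_cast; ring
    _ ≤ (n + 2 : ℕ) * q * E * (n + 2 : ℕ) := by gcongr
    _ = _ := by ring

theorem stmt2_general
    {Ω : Type*} [MeasurableSpace Ω] (μ : Measure Ω) [IsProbabilityMeasure μ]
    (K N F a : ℕ) (M : ℝ)
    (ha : (a : ℝ) = M * (F : ℝ) / (N : ℝ)) (ha_pos : 0 < a) (haF : a ≤ F)
    (C : Fin K × Fin N → Ω → Finset (Fin F))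
    (hC_meas : ∀ i, @Measurable _ _ _ ⊤ (C i))
    (hC_indep : iIndepFun (m := fun _ => (⊤ : MeasurableSpace (Finset (Fin F)))) C μ)
    (hC_unif : ∀ i (A : Finset (Fin F)),
      μ {ω | C i ω = A} = if A.card = a then ((F.choose a : ℝ≥0∞))⁻¹ else 0)
    (d : Fin K → Fin N) (hd : Function.Injective d)
    (V : Ω → Finset (Fin K) → Fin K → ℕ)
    (hV : ∀ ω S k, V ω S k =
      (Finset.univ.filter (fun f : Fin F =>
        ∀ j : Fin K, (f ∈ C (j, d k) ω ↔ j ∈ S.erase k))).card)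
    (R : Ω → ℝ)
    (hR : ∀ ω, R ω = (1 / (F : ℝ)) *
      ∑ S ∈ Finset.univ.filter (fun S : Finset (Fin K) => S.Nonempty),
        ((S.sup (fun k => V ω S k) : ℕ) : ℝ))
    (ht1 : 1 ≤ (K : ℝ) * M / (N : ℝ)) :
    (K : ℝ) * (1 - M / (N : ℝ)) -
        (F : ℝ) * (K : ℝ) * ((K : ℝ) * M / (N : ℝ)) *
          Real.exp (-2 * ((K : ℝ) * M / (N : ℝ)) *
            (1 - ((K : ℝ) * M / (N : ℝ)) / (K : ℝ)) * (1 - 1 / (K : ℝ)))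
      ≤ ∫ ω, R ω ∂μ := by
  classical
  have hF : (0 : ℝ) < F := by exact_mod_cast ha_pos.trans_le haF
  have hK : 1 ≤ K := Nat.one_le_iff_ne_zero.2 fun hK => by norm_num [hK] at ht1
  have hN : (N : ℝ) ≠ 0 := fun hN => by simp [hN, ha_pos.ne'] at ha
  set q : ℝ := a / F with hq_def
  have hMN : M / N = q := by rw [hq_def, ha]; field_simp
  have hq1 : q ≤ 1 := (div_le_one hF).2 (by exact_mod_cast haF)
  have hq : ∀ i f, μ.real {ω | f ∈ C i ω} = q := fun i f => by
    simpa using measureReal_mem_of_uniform_powersetCard (hC_meas i)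
      (fun A => by simpa using hC_unif i A) ha_pos (by simpa using haF) f
  have hVstored : ∀ ω S k,
      V ω S k = #{f | ω ∈ storedExactlyBy (fun j => C (j, d k)) f (S.erase k)} := fun ω S k => by
    rw [hV]; congr 1; ext f; simp [storedExactlyBy]
  have hbound := le_integral_sum_sup_card_storedExactlyBy hC_meas hC_indep hq hd
  have hcollision := natCast_mul_pred_mul_pow_le_exp hK (by positivity) hq1
  simp only [Fintype.card_fin] at hbound
  rw [mul_div_assoc, hMN]
  set X := ((K * (K - 1) : ℕ) : ℝ) * (q ^ 2 * (1 - q) ^ 2 * (q ^ 2 + (1 - q) ^ 2) ^ (K - 2))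
  calc _ ≤ K * (1 - q) - F * X := by nlinarith
    _ = (F : ℝ)⁻¹ * (F * (K * (1 - q)) - F ^ 2 * X) := by field_simp
    _ ≤ _ := by
        simp only [hR, hVstored, one_div, integral_const_mul]
        gcongr

/-- Coded caching with `K` users, `N > K` files, cache size `M`
(`0 < M ≤ N`), each file consisting of `F` packets, `a = M·F/N` a positive integer with
`a ≤ F`, under the *old placement* of Maddah-Ali–Niesen: an independent family `C (k,n)`
of uniformly random `a`-element subsets of the `F` packets; packet `f` of file `n` is
stored in cache `k` iff `f ∈ C (k,n)`.  For an injective demand vector `d` and nonempty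
`S ⊆ [K]`, `V ω S k` counts the packets of file `d k` stored in exactly the caches of
`S \ {k}`; the greedy clique-cover rate is `R = (1/F)·∑_{S ≠ ∅} max_{k∈S} V ω S k`.
If `t := K·M/N` satisfies `1 ≤ t ≤ K`, then
`E[R] ≥ K·(1 − M/N) − F·K·t·exp(−2t·(1 − t/K)·(1 − 1/K))`. -/
theorem stmt2
    {Ω : Type*} [MeasurableSpace Ω] (μ : Measure Ω) [IsProbabilityMeasure μ]
    (K N F a : ℕ) (M : ℝ)
    (hM : 0 < M) (hMN : M ≤ (N : ℝ)) (hNK : K < N)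
    (ha : (a : ℝ) = M * (F : ℝ) / (N : ℝ)) (ha_pos : 0 < a) (haF : a ≤ F)
    (C : Fin K × Fin N → Ω → Finset (Fin F))
    (hC_meas : ∀ i, @Measurable _ _ _ ⊤ (C i))
    (hC_indep : iIndepFun (m := fun _ => (⊤ : MeasurableSpace (Finset (Fin F)))) C μ)
    (hC_unif : ∀ i (A : Finset (Fin F)),
      μ {ω | C i ω = A} = if A.card = a then ((F.choose a : ℝ≥0∞))⁻¹ else 0)
    (d : Fin K → Fin N) (hd : Function.Injective d)
    (V : Ω → Finset (Fin K) → Fin K → ℕ)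
    (hV : ∀ ω S k, V ω S k =
      (Finset.univ.filter (fun f : Fin F =>
        ∀ j : Fin K, (f ∈ C (j, d k) ω ↔ j ∈ S.erase k))).card)
    (R : Ω → ℝ)
    (hR : ∀ ω, R ω = (1 / (F : ℝ)) *
      ∑ S ∈ Finset.univ.filter (fun S : Finset (Fin K) => S.Nonempty),
        ((S.sup (fun k => V ω S k) : ℕ) : ℝ))
    (ht1 : 1 ≤ (K : ℝ) * M / (N : ℝ)) (htK : (K : ℝ) * M / (N : ℝ) ≤ (K : ℝ)) :
    (K : ℝ) * (1 - M / (N : ℝ)) -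
        (F : ℝ) * (K : ℝ) * ((K : ℝ) * M / (N : ℝ)) *
          Real.exp (-2 * ((K : ℝ) * M / (N : ℝ)) *
            (1 - ((K : ℝ) * M / (N : ℝ)) / (K : ℝ)) * (1 - 1 / (K : ℝ)))
      ≤ ∫ ω, R ω ∂μ :=
  stmt2_general μ K N F a M ha ha_pos haF C hC_meas hC_indep hC_unif d hd V hV R hR ht1
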